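/- arXiv:2106.09405 — 6 statements merged into one kernel-verified Lean document; each statement's English description precedes it below -/
import Mathlib

section
/- Let ε ∈ (0,1], p ∈ Δ(K), x a mixed action, and x' := c_ε(x,p) the image of x under the ε-silent mapping at p. Then for every i ∈ I, the marginal of x' under p equals the marginal of x under p: x̄'^p(i) = x̄^p(i). -/
open Finset

noncomputable section
open Classical

/-- `p` is an element of the probability simplex Δ(K). -/
def pSimplex {K : Type*} [Fintype K] (p : K → ℝ) : Prop :=
  (∀ k, 0 ≤ p k) ∧ ∑ k, p k = 1

/-- `x : K → Δ(I)` is a mixed action, written `x k i = x(i|k)`. -/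
def MixedAction {K I : Type*} [Fintype K] [Fintype I] (x : K → I → ℝ) : Prop :=
  (∀ k i, 0 ≤ x k i) ∧ ∀ k, ∑ i, x k i = 1

/-- Marginal `x̄^p(i) = ∑_k p(k)·x(i|k)`. -/
def bar {K I : Type*} [Fintype K] (p : K → ℝ) (x : K → I → ℝ) (i : I) : ℝ :=
  ∑ k, p k * x k i

/-- Posterior `p^x(k|i)`. -/
def post {K I : Type*} [Fintype K] (p : K → ℝ) (x : K → I → ℝ) (i : I) (k : K) : ℝ :=
  if bar p x i ≠ 0 then x k i * p k / bar p x i else p k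

/-- The set `NR[x,ε,p]` of (x,ε)-non-revealing actions at p. -/
def NRset {K I : Type*} [Fintype K] [Fintype I] (x : K → I → ℝ) (ε : ℝ) (p : K → ℝ) :
    Finset I :=
  Finset.univ.filter fun i =>
    bar p x i ≠ 0 ∧ ∀ k, (1 - ε) * bar p x i ≤ x k i ∧ x k i ≤ (1 + ε) * bar p x i

/-- The set `R[x,ε,p]` of (x,ε)-revealing actions at p. -/
def Rset {K I : Type*} [Fintype K] [Fintype I] (x : K → I → ℝ) (ε : ℝ) (p : K → ℝ) :
    Finset I :=
  (Finset.univ.filter fun i => bar p x i ≠ 0) \ NRset x ε p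

/-- `x(A|k) = ∑_{i∈A} x(i|k)`. -/
def xOn {K I : Type*} (x : K → I → ℝ) (A : Finset I) (k : K) : ℝ := ∑ i ∈ A, x k i

/-- `x̄^p(A) = ∑_{i∈A} x̄^p(i)`. -/
def barOn {K I : Type*} [Fintype K] (p : K → ℝ) (x : K → I → ℝ) (A : Finset I) : ℝ :=
  ∑ i ∈ A, bar p x i

/-- The ε-silent mapping `c_ε(x,p)`. -/
def silent {K I : Type*} [Fintype K] [Fintype I] (ε : ℝ) (x : K → I → ℝ) (p : K → ℝ) :
    K → I → ℝ :=
  fun k i =>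
    if i ∈ NRset x ε p then
      ((1 - ε) * xOn x (NRset x ε p) k / barOn p x (NRset x ε p) + ε) * bar p x i
    else (1 - ε) * x k i + ε * bar p x i

/-!
On the non-revealing set `A = NR[x,ε,p]` the silent mapping keeps the total weight `x(A|k)` of
each type `k` but spreads it over `A` proportionally to the marginal; call this `x` pooled on `A`.
Then `c_ε(x,p) = (1-ε)·(x pooled on A) + ε·x̄^p`, a combination of two mixed actions whose
marginal is `x̄^p`, and the marginal is affine in the mixed action because `∑_k p(k) = 1`.
-/

def pool {K I : Type*} [Fintype K] (p : K → ℝ) (x : K → I → ℝ) (A : Finset I) : K → I → ℝ :=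
  fun k i => if i ∈ A then xOn x A k / barOn p x A * bar p x i else x k i

section Marginal

variable {K I : Type*} [Fintype K] {p : K → ℝ} {x : K → I → ℝ}

lemma bar_nonneg (hp : ∀ k, 0 ≤ p k) (hx : ∀ k i, 0 ≤ x k i) (i : I) : 0 ≤ bar p x i :=
  Finset.sum_nonneg fun k _ => mul_nonneg (hp k) (hx k i)

lemma bar_ne_zero_of_mem_NRset [Fintype I] {ε : ℝ} {i : I} (hi : i ∈ NRset x ε p) :
    bar p x i ≠ 0 :=
  (Finset.mem_filter.mp hi).2.1

lemma barOn_pos {A : Finset I} {i : I} (hbar : ∀ j, 0 ≤ bar p x j) (hi : i ∈ A)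
    (hne : bar p x i ≠ 0) : 0 < barOn p x A :=
  (hbar i).lt_of_ne' hne |>.trans_le (Finset.single_le_sum (fun j _ => hbar j) hi)

lemma sum_mul_xOn (A : Finset I) : ∑ k, p k * xOn x A k = barOn p x A := by
  simp only [xOn, barOn, bar, Finset.mul_sum]
  exact Finset.sum_comm

lemma bar_pool {A : Finset I} (hbar : ∀ j, 0 ≤ bar p x j) (hA : ∀ j ∈ A, bar p x j ≠ 0)
    (i : I) : bar p (pool p x A) i = bar p x i := by
  by_cases hi : i ∈ A
  · have hpos := barOn_pos hbar hi (hA i hi)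
    calc bar p (pool p x A) i
        = (∑ k, p k * xOn x A k) / barOn p x A * bar p x i := by
          simp only [bar, pool, if_pos hi, Finset.sum_div, Finset.sum_mul, mul_div_assoc,
            mul_assoc]
      _ = bar p x i := by rw [sum_mul_xOn, div_self hpos.ne', one_mul]
  · simp only [bar, pool, if_neg hi]

lemma bar_add_const (hp : ∑ k, p k = 1) (a b : ℝ) (y : K → I → ℝ) (c : I → ℝ) (i : I) :
    bar p (fun k j => a * y k j + b * c j) i = a * bar p y i + b * c i := by
  calc ∑ k, p k * (a * y k i + b * c i)
      = a * ∑ k, p k * y k i + (∑ k, p k) * (b * c i) := by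
        rw [Finset.mul_sum, Finset.sum_mul, ← Finset.sum_add_distrib]
        exact Finset.sum_congr rfl fun k _ => by ring
    _ = a * bar p y i + b * c i := by rw [hp, one_mul, bar]

lemma silent_eq_pool [Fintype I] (ε : ℝ) (x : K → I → ℝ) (p : K → ℝ) :
    silent ε x p = fun k i => (1 - ε) * pool p x (NRset x ε p) k i + ε * bar p x i := by
  funext k i
  simp only [silent, pool]
  split_ifs <;> ring

end Marginal

theorem silent_preserves_marginal_general {K I : Type*} [Fintype K] [Fintype I]
    (ε : ℝ)
    (p : K → ℝ) (hp : pSimplex p)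
    (x : K → I → ℝ) (hx : MixedAction x) :
    ∀ i : I, bar p (silent ε x p) i = bar p x i := by
  intro i
  rw [silent_eq_pool, bar_add_const hp.2,
    bar_pool (bar_nonneg hp.1 hx.1) (fun _ => bar_ne_zero_of_mem_NRset)]
  ring

/-- the ε-silent mapping preserves marginals. -/
theorem silent_preserves_marginal {K I : Type*} [Fintype K] [Fintype I]
    [Nonempty K] [Nonempty I]
    (ε : ℝ) (hε0 : 0 < ε) (hε1 : ε ≤ 1)
    (p : K → ℝ) (hp : pSimplex p)
    (x : K → I → ℝ) (hx : MixedAction x) :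
    ∀ i : I, bar p (silent ε x p) i = bar p x i :=
  silent_preserves_marginal_general ε p hp x hx
end
end

section
/- Let ε ∈ (0,1/4], ε₀ := (1−√(1−4ε))/2, p ∈ Δ(K), x a mixed action, and x' := c_{ε₀}(x,p). Then for every i ∈ I, ‖p^{x'}(·|i) − p^x(·|i)‖₁ ≤ 6ε. -/
/-!
The silent mapping preserves every marginal `x̄^p(i)`, so old and new posteriors share their
denominator. On a revealing action the new posterior is `(1 - ε₀) p^x(·|i) + ε₀ p`, at ℓ¹-distance
at most `ε₀ ‖p - p^x(·|i)‖₁ ≤ 2ε₀` from the old one. On a non-revealing action the old posterior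
is `p` rescaled coordinatewise by factors in `[1 - ε₀, 1 + ε₀]`, and the new one by factors in
`[1 - ε₀(1 - ε₀), 1 + ε₀(1 - ε₀)]`, so both are `ε₀`-close to `p` and again `2ε₀`-close to each
other. Finally `ε₀ ≤ 2ε` because `√y ≥ y` for `y ≤ 1`.
-/

open Finset

noncomputable section
open Classical

lemma abs_div_sub_one_le {a c δ : ℝ} (hc : 0 < c) (hlo : (1 - δ) * c ≤ a)
    (hhi : a ≤ (1 + δ) * c) : |a / c - 1| ≤ δ := by
  rw [abs_sub_le_iff, sub_le_iff_le_add, sub_le_comm, div_le_iff₀ hc, le_div_iff₀ hc]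
  constructor <;> linarith

lemma abs_mul_sub_self_le {t q δ : ℝ} (ht : |t - 1| ≤ δ) (hq : 0 ≤ q) :
    |t * q - q| ≤ δ * q := by
  rw [← sub_one_mul, abs_mul, abs_of_nonneg hq]
  exact mul_le_mul_of_nonneg_right ht hq

lemma sum_abs_sub_le_two {K : Type*} [Fintype K] {q r : K → ℝ} (hq : pSimplex q)
    (hr : pSimplex r) : ∑ k, |q k - r k| ≤ 2 := by
  calc ∑ k, |q k - r k| ≤ ∑ k, (q k + r k) :=
        sum_le_sum fun k _ => (abs_sub _ _).trans_eq (by rw [abs_of_nonneg (hq.1 k),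
          abs_of_nonneg (hr.1 k)])
    _ = 2 := by rw [sum_add_distrib, hq.2, hr.2]; norm_num

section Posterior

variable {K I : Type*} [Fintype K] {p : K → ℝ} {x : K → I → ℝ}

lemma post_of_bar_ne_zero {i : I} (h : bar p x i ≠ 0) (k : K) :
    post p x i k = x k i / bar p x i * p k := by
  rw [post, if_pos h, div_mul_eq_mul_div]

lemma post_of_bar_eq_zero {i : I} (h : bar p x i = 0) : post p x i = p := by
  funext k
  simp [post, h]

lemma pSimplex_post (hp : pSimplex p) (hx : ∀ k i, 0 ≤ x k i) (i : I) :
    pSimplex (post p x i) := by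
  rcases eq_or_ne (bar p x i) 0 with h | h
  · rwa [post_of_bar_eq_zero h]
  have hpos : 0 < bar p x i := (bar_nonneg hp.1 hx i).lt_of_ne' h
  refine ⟨fun k => ?_, ?_⟩
  · rw [post_of_bar_ne_zero h]
    exact mul_nonneg (div_nonneg (hx k i) hpos.le) (hp.1 k)
  · simp only [post_of_bar_ne_zero h, div_mul_eq_mul_div, ← sum_div, mul_comm (x _ i)]
    exact div_self h

end Posterior

section Silent

variable {K I : Type*} [Fintype K] [Fintype I] {p : K → ℝ} {x : K → I → ℝ} {e : ℝ} {i : I}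

lemma bar_pos_of_mem_NRset (hp : ∀ k, 0 ≤ p k) (hx : ∀ k i, 0 ≤ x k i)
    (hi : i ∈ NRset x e p) : 0 < bar p x i :=
  (bar_nonneg hp hx i).lt_of_ne' (mem_filter.mp hi).2.1

lemma barOn_NRset_pos (hp : ∀ k, 0 ≤ p k) (hx : ∀ k i, 0 ≤ x k i)
    (hi : i ∈ NRset x e p) : 0 < barOn p x (NRset x e p) :=
  (bar_pos_of_mem_NRset hp hx hi).trans_le
    (single_le_sum (fun j _ => bar_nonneg hp hx j) hi)

lemma abs_div_bar_sub_one_le_of_mem_NRset (hp : ∀ k, 0 ≤ p k) (hx : ∀ k i, 0 ≤ x k i)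
    (hi : i ∈ NRset x e p) (k : K) : |x k i / bar p x i - 1| ≤ e :=
  abs_div_sub_one_le (bar_pos_of_mem_NRset hp hx hi) ((mem_filter.mp hi).2.2 k).1
    ((mem_filter.mp hi).2.2 k).2

lemma abs_xOn_NRset_div_sub_one_le (hp : ∀ k, 0 ≤ p k) (hx : ∀ k i, 0 ≤ x k i)
    (hi : i ∈ NRset x e p) (k : K) :
    |xOn x (NRset x e p) k / barOn p x (NRset x e p) - 1| ≤ e := by
  refine abs_div_sub_one_le (barOn_NRset_pos hp hx hi) ?_ ?_ <;> simp only [barOn, xOn, mul_sum]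
  · exact sum_le_sum fun j hj => ((mem_filter.mp hj).2.2 k).1
  · exact sum_le_sum fun j hj => ((mem_filter.mp hj).2.2 k).2

lemma bar_silent (hp : pSimplex p) (hx : ∀ k i, 0 ≤ x k i) (i : I) :
    bar p (silent e x p) i = bar p x i := by
  show ∑ k, p k * silent e x p k i = bar p x i
  by_cases hi : i ∈ NRset x e p
  · have hB := (barOn_NRset_pos hp.1 hx hi).ne'
    simp only [silent, if_pos hi]
    calc ∑ k, p k * (((1 - e) * xOn x (NRset x e p) k / barOn p x (NRset x e p) + e) * bar p x i)
        = ((1 - e) / barOn p x (NRset x e p) * ∑ k, p k * xOn x (NRset x e p) k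
            + e * ∑ k, p k) * bar p x i := by
          rw [mul_sum, mul_sum, ← sum_add_distrib, sum_mul]
          exact sum_congr rfl fun k _ => by ring
      _ = bar p x i := by rw [sum_mul_xOn, hp.2, div_mul_cancel₀ _ hB]; ring
  · simp only [silent, if_neg hi, mul_add, sum_add_distrib, ← sum_mul, hp.2]
    simp only [bar, mul_left_comm (p _), ← mul_sum]
    ring

lemma post_silent_of_mem_NRset (hp : pSimplex p) (hx : ∀ k i, 0 ≤ x k i)
    (hi : i ∈ NRset x e p) (k : K) :
    post p (silent e x p) i k =
      ((1 - e) * (xOn x (NRset x e p) k / barOn p x (NRset x e p)) + e) * p k := by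
  have hb := (bar_pos_of_mem_NRset hp.1 hx hi).ne'
  rw [post_of_bar_ne_zero (by rwa [bar_silent hp hx]), bar_silent hp hx, silent, if_pos hi,
    mul_div_cancel_right₀ _ hb, mul_div_assoc]

lemma post_silent_sub_post_of_not_mem_NRset (hp : pSimplex p) (hx : ∀ k i, 0 ≤ x k i)
    (hi : i ∉ NRset x e p) (hb : bar p x i ≠ 0) (k : K) :
    post p (silent e x p) i k - post p x i k = e * (p k - post p x i k) := by
  rw [post_of_bar_ne_zero (by rwa [bar_silent hp hx]), bar_silent hp hx, silent, if_neg hi,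
    post_of_bar_ne_zero hb]
  field_simp
  ring

lemma sum_abs_post_silent_sub_post_le_of_mem_NRset (he1 : e ≤ 1) (hp : pSimplex p)
    (hx : ∀ k i, 0 ≤ x k i) (hi : i ∈ NRset x e p) :
    ∑ k, |post p (silent e x p) i k - post p x i k| ≤ 2 * e := by
  have hclose : ∀ k, |post p (silent e x p) i k - post p x i k| ≤ 2 * e * p k := fun k => by
    have hsilent : |post p (silent e x p) i k - p k| ≤ e * p k := by
      rw [post_silent_of_mem_NRset hp hx hi]
      refine abs_mul_sub_self_le ?_ (hp.1 k)
      rw [show ∀ t, (1 - e) * t + e - 1 = (1 - e) * (t - 1) from fun t => by ring, abs_mul,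
        abs_of_nonneg (sub_nonneg.mpr he1)]
      nlinarith [abs_xOn_NRset_div_sub_one_le hp.1 hx hi k, abs_nonneg
        (xOn x (NRset x e p) k / barOn p x (NRset x e p) - 1)]
    have hpost : |post p x i k - p k| ≤ e * p k := by
      rw [post_of_bar_ne_zero (bar_pos_of_mem_NRset hp.1 hx hi).ne']
      exact abs_mul_sub_self_le (abs_div_bar_sub_one_le_of_mem_NRset hp.1 hx hi k) (hp.1 k)
    linarith [abs_sub_le (post p (silent e x p) i k) (p k) (post p x i k),
      abs_sub_comm (p k) (post p x i k)]
  calc ∑ k, |post p (silent e x p) i k - post p x i k| ≤ ∑ k, 2 * e * p k :=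
        sum_le_sum fun k _ => hclose k
    _ = 2 * e := by rw [← mul_sum, hp.2, mul_one]

lemma sum_abs_post_silent_sub_post_le_of_not_mem_NRset (he0 : 0 ≤ e) (hp : pSimplex p)
    (hx : ∀ k i, 0 ≤ x k i) (hi : i ∉ NRset x e p) (hb : bar p x i ≠ 0) :
    ∑ k, |post p (silent e x p) i k - post p x i k| ≤ 2 * e := by
  simp only [post_silent_sub_post_of_not_mem_NRset hp hx hi hb, abs_mul, abs_of_nonneg he0,
    ← mul_sum]
  nlinarith [sum_abs_sub_le_two hp (pSimplex_post hp hx i)]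

lemma sum_abs_post_silent_sub_post_le (he0 : 0 ≤ e) (he1 : e ≤ 1) (hp : pSimplex p)
    (hx : ∀ k i, 0 ≤ x k i) (i : I) :
    ∑ k, |post p (silent e x p) i k - post p x i k| ≤ 2 * e := by
  by_cases hb : bar p x i = 0
  · have hb' : bar p (silent e x p) i = 0 := by rwa [bar_silent hp hx]
    simp [post_of_bar_eq_zero hb, post_of_bar_eq_zero hb', he0]
  by_cases hi : i ∈ NRset x e p
  · exact sum_abs_post_silent_sub_post_le_of_mem_NRset he1 hp hx hi
  · exact sum_abs_post_silent_sub_post_le_of_not_mem_NRset he0 hp hx hi hb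

end Silent

theorem silent_posterior_close_general {K I : Type*} [Fintype K] [Fintype I]
    (ε : ℝ) (hε0 : 0 < ε)
    (p : K → ℝ) (hp : pSimplex p)
    (x : K → I → ℝ) (hx : MixedAction x) :
    ∀ i : I,
      ∑ k, |post p (silent ((1 - Real.sqrt (1 - 4*ε))/2) x p) i k - post p x i k| ≤ 6 * ε := by
  intro i
  have hsqrt_le_one : Real.sqrt (1 - 4*ε) ≤ 1 := Real.sqrt_le_one.mpr (by linarith)
  have hle_sqrt : 1 - 4*ε ≤ Real.sqrt (1 - 4*ε) := Real.le_sqrt_self_iff.mpr (by linarith)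
  calc _ ≤ 2 * ((1 - Real.sqrt (1 - 4*ε))/2) :=
        sum_abs_post_silent_sub_post_le (by linarith) (by linarith [Real.sqrt_nonneg (1 - 4*ε)])
          hp hx.1 i
    _ ≤ 6 * ε := by linarith

/-- posteriors under x' = c_{ε₀}(x,p) are 6ε-close in ℓ¹ to those under x. -/
theorem silent_posterior_close {K I : Type*} [Fintype K] [Fintype I] [Nonempty K] [Nonempty I]
    (ε : ℝ) (hε0 : 0 < ε) (hε1 : ε ≤ 1/4)
    (p : K → ℝ) (hp : pSimplex p)
    (x : K → I → ℝ) (hx : MixedAction x) :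
    ∀ i : I,
      ∑ k, |post p (silent ((1 - Real.sqrt (1 - 4*ε))/2) x p) i k - post p x i k| ≤ 6 * ε :=
  silent_posterior_close_general ε hε0 p hp x hx
end
end

section
/- Let ε > 0, G ≥ 0, p ∈ Δ(K), q ∈ Δ(L), y : L → Δ(J), and g : K × L × I × J → ℝ with |g(k,ℓ,i,j)| ≤ G for all k,ℓ,i,j. Let x and x' be mixed actions such that x̄'^p(i) = x̄^p(i) for all i ∈ I and ‖p^{x'}(·|i) − p^x(·|i)‖₁ ≤ ε for all i ∈ I. Then |∑_{k,ℓ,i,j} p(k)·q(ℓ)·x'(i|k)·y(j|ℓ)·g(k,ℓ,i,j) − ∑_{k,ℓ,i,j} p(k)·q(ℓ)·x(i|k)·y(j|ℓ)·g(k,ℓ,i,j)| ≤ ε·G. -/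
/-! With `h k i` the expected payoff of `i` in state `k` against `(q, y)`, so `|h| ≤ G`, the payoff
of `x` is `∑ i, x̄^p(i) ∑ k, p^x(k|i) h k i`. Since `x` and `x'` have the same marginal, the two
payoffs differ in each `i` by `x̄^p(i)` times a pairing of the posterior gap with `h`, which is at
most `x̄^p(i) ε G`; the marginal sums to one. -/

open Finset

noncomputable section
open Classical

theorem abs_sum_mul_le_sum_abs_mul {ι : Type*} [Fintype ι] (d f : ι → ℝ) {G : ℝ}
    (hf : ∀ k, |f k| ≤ G) : |∑ k, d k * f k| ≤ (∑ k, |d k|) * G :=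
  calc |∑ k, d k * f k| ≤ ∑ k, |d k| * |f k| := by
        simpa only [abs_mul] using abs_sum_le_sum_abs (fun k => d k * f k) univ
    _ ≤ ∑ k, |d k| * G := by gcongr with k; exact hf k
    _ = (∑ k, |d k|) * G := (sum_mul ..).symm

theorem pSimplex.abs_sum_mul_le {ι : Type*} [Fintype ι] {w f : ι → ℝ} {G : ℝ}
    (hw : pSimplex w) (hf : ∀ k, |f k| ≤ G) : |∑ k, w k * f k| ≤ G := by
  have hw_abs : ∑ k, |w k| = 1 := by simp_rw [abs_of_nonneg (hw.1 _)]; exact hw.2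
  simpa only [hw_abs, one_mul] using abs_sum_mul_le_sum_abs_mul w f hf

theorem MixedAction.pSimplex {K I : Type*} [Fintype K] [Fintype I] {x : K → I → ℝ}
    (hx : MixedAction x) (k : K) : pSimplex (x k) :=
  ⟨hx.1 k, hx.2 k⟩

theorem pSimplex.bar {K I : Type*} [Fintype K] [Fintype I] {p : K → ℝ} {x : K → I → ℝ}
    (hp : pSimplex p) (hx : MixedAction x) : pSimplex (bar p x) := by
  refine ⟨fun i => sum_nonneg fun k _ => mul_nonneg (hp.1 k) (hx.1 k i), ?_⟩
  simp only [_root_.bar]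
  rw [Finset.sum_comm]
  simp_rw [← mul_sum, hx.2, mul_one, hp.2]

theorem mul_eq_bar_mul_post {K I : Type*} [Fintype K] {p : K → ℝ} {x : K → I → ℝ}
    (hp : ∀ k, 0 ≤ p k) (hx : ∀ k i, 0 ≤ x k i) (i : I) (k : K) :
    p k * x k i = bar p x i * post p x i k := by
  by_cases hb : bar p x i = 0
  · rw [hb, zero_mul]
    exact (sum_eq_zero_iff_of_nonneg fun k _ => mul_nonneg (hp k) (hx k i)).mp hb k
      (mem_univ k)
  · rw [post, if_pos hb]
    field_simp

theorem sum_mul_eq_bar_mul_sum_post {K I : Type*} [Fintype K] {p : K → ℝ} {x : K → I → ℝ}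
    (hp : ∀ k, 0 ≤ p k) (hx : ∀ k i, 0 ≤ x k i) (h : K → I → ℝ) (i : I) :
    ∑ k, p k * x k i * h k i = bar p x i * ∑ k, post p x i k * h k i := by
  simp_rw [mul_eq_bar_mul_post hp hx i, mul_sum, mul_assoc]

def statePayoff {K L I J : Type*} [Fintype L] [Fintype J] (q : L → ℝ) (y : L → J → ℝ)
    (g : K → L → I → J → ℝ) (k : K) (i : I) : ℝ :=
  ∑ l, q l * ∑ j, y l j * g k l i j

theorem abs_statePayoff_le {K L I J : Type*} [Fintype L] [Fintype J] {q : L → ℝ}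
    {y : L → J → ℝ} {g : K → L → I → J → ℝ} {G : ℝ} (hq : pSimplex q) (hy : MixedAction y)
    (hg : ∀ k l i j, |g k l i j| ≤ G) (k : K) (i : I) : |statePayoff q y g k i| ≤ G :=
  hq.abs_sum_mul_le fun l => (hy.pSimplex l).abs_sum_mul_le fun j => hg k l i j

theorem sum_payoff_eq_sum_statePayoff {K L I J : Type*} [Fintype K] [Fintype L] [Fintype I]
    [Fintype J] (p : K → ℝ) (q : L → ℝ) (x : K → I → ℝ) (y : L → J → ℝ)
    (g : K → L → I → J → ℝ) :
    ∑ k, ∑ l, ∑ i, ∑ j, p k * q l * x k i * y l j * g k l i j =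
      ∑ i, ∑ k, p k * x k i * statePayoff q y g k i := by
  rw [Finset.sum_comm (γ := I)]
  refine Finset.sum_congr rfl fun k _ => ?_
  rw [Finset.sum_comm]
  simp_rw [statePayoff, mul_sum]
  refine Finset.sum_congr rfl fun i _ => Finset.sum_congr rfl fun l _ =>
    Finset.sum_congr rfl fun j _ => ?_
  ring

theorem payoff_close_general {K L I J : Type*} [Fintype K] [Fintype L] [Fintype I] [Fintype J]
    (ε G : ℝ) (hG : 0 ≤ G)
    (p : K → ℝ) (hp : pSimplex p) (q : L → ℝ) (hq : pSimplex q)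
    (y : L → J → ℝ) (hy : MixedAction y)
    (g : K → L → I → J → ℝ) (hg : ∀ k l i j, |g k l i j| ≤ G)
    (x x' : K → I → ℝ) (hx : MixedAction x) (hx' : MixedAction x')
    (hbar : ∀ i, bar p x' i = bar p x i)
    (hpost : ∀ i, ∑ k, |post p x' i k - post p x i k| ≤ ε) :
    |(∑ k, ∑ l, ∑ i, ∑ j, p k * q l * x' k i * y l j * g k l i j) -
        ∑ k, ∑ l, ∑ i, ∑ j, p k * q l * x k i * y l j * g k l i j| ≤ ε * G := by
  set h := statePayoff q y g
  have hpx := hp.bar hx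
  have posterior_gap (i : I) :
      |∑ k, p k * x' k i * h k i - ∑ k, p k * x k i * h k i| ≤ bar p x i * (ε * G) := by
    rw [sum_mul_eq_bar_mul_sum_post hp.1 hx'.1, sum_mul_eq_bar_mul_sum_post hp.1 hx.1, hbar,
      ← mul_sub, ← sum_sub_distrib, abs_mul, abs_of_nonneg (hpx.1 i)]
    simp_rw [← sub_mul]
    refine mul_le_mul_of_nonneg_left ?_ (hpx.1 i)
    calc _ ≤ (∑ k, |post p x' i k - post p x i k|) * G :=
          abs_sum_mul_le_sum_abs_mul _ _ (abs_statePayoff_le hq hy hg · i)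
      _ ≤ ε * G := mul_le_mul_of_nonneg_right (hpost i) hG
  rw [sum_payoff_eq_sum_statePayoff, sum_payoff_eq_sum_statePayoff, ← sum_sub_distrib]
  calc _ ≤ ∑ i, bar p x i * (ε * G) :=
        (abs_sum_le_sum_abs _ _).trans (sum_le_sum fun i _ => posterior_gap i)
    _ = ε * G := by rw [← sum_mul, hpx.2, one_mul]

/-- payoff closeness under marginal preservation and ℓ¹-closeness of posteriors. -/
theorem payoff_close {K L I J : Type*} [Fintype K] [Fintype L] [Fintype I] [Fintype J]
    [Nonempty K] [Nonempty L] [Nonempty I] [Nonempty J]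
    (ε G : ℝ) (hε : 0 < ε) (hG : 0 ≤ G)
    (p : K → ℝ) (hp : pSimplex p) (q : L → ℝ) (hq : pSimplex q)
    (y : L → J → ℝ) (hy : MixedAction y)
    (g : K → L → I → J → ℝ) (hg : ∀ k l i j, |g k l i j| ≤ G)
    (x x' : K → I → ℝ) (hx : MixedAction x) (hx' : MixedAction x')
    (hbar : ∀ i, bar p x' i = bar p x i)
    (hpost : ∀ i, ∑ k, |post p x' i k - post p x i k| ≤ ε) :
    |(∑ k, ∑ l, ∑ i, ∑ j, p k * q l * x' k i * y l j * g k l i j) -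
        ∑ k, ∑ l, ∑ i, ∑ j, p k * q l * x k i * y l j * g k l i j| ≤ ε * G :=
  payoff_close_general ε G hG p hp q hq y hy g hg x x' hx hx' hbar hpost
end
end

section
/- Let ε > 0 and p ∈ Δ(K) with p(k) > 0 for all k ∈ K, and let x be a mixed action. Then for every i ∈ R[x,ε,p], ‖p^x(·|i) − p‖₁ ≥ ε·min_{k∈K} p(k). -/
open Finset

noncomputable section
open Classical

/-! An action `i` is revealing exactly when some type `k` has `|x(i|k) - x̄(i)| > ε x̄(i)`.
Since `p^x(k|i) - p(k) = p(k) (x(i|k) - x̄(i)) / x̄(i)` and `x̄(i) > 0`, that single coordinate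
already contributes at least `ε p(k) ≥ ε min p` to the ℓ¹ distance. -/

section Posterior

variable {K I : Type*} [Fintype K]

theorem mem_Rset_iff [Fintype I] {x : K → I → ℝ} {ε : ℝ} {p : K → ℝ} {i : I} :
    i ∈ Rset x ε p ↔ bar p x i ≠ 0 ∧ ∃ k, ε * bar p x i < |x k i - bar p x i| := by
  simp only [Rset, NRset, mem_sdiff, mem_filter, mem_univ, true_and, not_and, not_forall]
  refine and_congr_right fun hbar => ⟨fun h => ?_, fun ⟨k, hk⟩ _ => ⟨k, ?_⟩⟩
  · obtain ⟨k, hk⟩ := h hbar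
    refine ⟨k, lt_abs.mpr ?_⟩
    by_cases hlow : (1 - ε) * bar p x i ≤ x k i
    · exact .inl (by linarith [hk hlow])
    · exact .inr (by linarith)
  · intro hlow
    rcases lt_abs.mp hk with hk | hk <;> linarith

theorem bar_pos {p : K → ℝ} {x : K → I → ℝ} {i : I} (hp : ∀ k, 0 ≤ p k)
    (hx : ∀ k, 0 ≤ x k i) (hbar : bar p x i ≠ 0) : 0 < bar p x i :=
  (sum_nonneg fun k _ => mul_nonneg (hp k) (hx k)).lt_of_ne' hbar

theorem post_sub_self {p : K → ℝ} {x : K → I → ℝ} {i : I} (hbar : bar p x i ≠ 0) (k : K) :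
    post p x i k - p k = p k * (x k i - bar p x i) / bar p x i := by
  rw [post, if_pos hbar]
  field_simp

theorem mul_le_abs_post_sub {ε : ℝ} {p : K → ℝ} {x : K → I → ℝ} {i : I} {k : K}
    (hpk : 0 ≤ p k) (hbar : 0 < bar p x i) (hdev : ε * bar p x i < |x k i - bar p x i|) :
    ε * p k ≤ |post p x i k - p k| := by
  rw [post_sub_self hbar.ne', abs_div, abs_mul, abs_of_nonneg hpk, abs_of_pos hbar,
    le_div_iff₀ hbar]
  calc ε * p k * bar p x i = p k * (ε * bar p x i) := by ring
    _ ≤ p k * |x k i - bar p x i| := mul_le_mul_of_nonneg_left hdev.le hpk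

end Posterior

theorem revealing_posterior_far_general {K I : Type*} [Fintype K] [Fintype I]
    [Nonempty K]
    (ε : ℝ) (hε : 0 < ε)
    (p : K → ℝ) (hpos : ∀ k, 0 < p k)
    (x : K → I → ℝ) (hx : MixedAction x) :
    ∀ i ∈ Rset x ε p,
      ε * Finset.univ.inf' Finset.univ_nonempty p ≤ ∑ k, |post p x i k - p k| := by
  intro i hi
  obtain ⟨hbar, k, hdev⟩ := mem_Rset_iff.mp hi
  have hbar_pos := bar_pos (fun k => (hpos k).le) (fun k => hx.1 k i) hbar
  calc ε * univ.inf' univ_nonempty p ≤ ε * p k :=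
        mul_le_mul_of_nonneg_left (inf'_le _ (mem_univ k)) hε.le
    _ ≤ |post p x i k - p k| := mul_le_abs_post_sub (hpos k).le hbar_pos hdev
    _ ≤ ∑ k, |post p x i k - p k| :=
        single_le_sum (f := fun k => |post p x i k - p k|) (fun _ _ => abs_nonneg _) (mem_univ k)

/-- revealing actions move the posterior by at least ε·min_k p(k) in ℓ¹. -/
theorem revealing_posterior_far {K I : Type*} [Fintype K] [Fintype I]
    [Nonempty K] [Nonempty I]
    (ε : ℝ) (hε : 0 < ε)
    (p : K → ℝ) (hp : pSimplex p) (hpos : ∀ k, 0 < p k)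
    (x : K → I → ℝ) (hx : MixedAction x) :
    ∀ i ∈ Rset x ε p,
      ε * Finset.univ.inf' Finset.univ_nonempty p ≤ ∑ k, |post p x i k - p k| :=
  revealing_posterior_far_general ε hε p hpos x hx
end
end

section
/- Let (Ω, F, P) be a probability space with a filtration (F_m)_{m≥1}, let (p_m)_{m≥1} be a martingale with respect to (F_m) taking values in the simplex Δ(K) ⊆ ℝ^K, let T be a stopping time with respect to (F_m) with values in ℕ ∪ {∞}, and let c > 0. Suppose that for every m ≥ 1, almost surely 1_{m≤T}·E(‖p_{m+1} − p_m‖₁ | F_m) ≤ c·1_{m≤T}·E(‖p_{m+1} − p_m‖₁² | F_m). Then E(∑_{m=1}^∞ 1_{m≤T}·‖p_{m+1} − p_m‖₁) ≤ c·|K|. -/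
/-!
On the `ℱ (m + 1)`-measurable event `{m + 1 ≤ T}` the hypothesis trades the expected ℓ¹ increment
for `c` times the expected squared ℓ¹ increment, and `‖v‖₁² ≤ |K| ‖v‖₂²`. Martingale increments
are orthogonal in `L²`, so the expected squared ℓ² increments telescope to
`E ‖p_n‖₂² - E ‖p_1‖₂² ≤ 1`, because `‖x‖₂² ≤ 1` on the simplex.
-/

open Finset MeasureTheory
open scoped ENNReal

lemma tsum_le_of_le_mul_sub {a S : ℕ → ℝ} {C B : ℝ} (ha : ∀ n, 0 ≤ a n) (hC : 0 ≤ C)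
    (hS : ∀ n, S n - S 0 ≤ B) (h : ∀ n, a n ≤ C * (S (n + 1) - S n)) :
    ∑' n, a n ≤ C * B :=
  Real.tsum_le_of_sum_range_le ha fun N =>
    calc ∑ n ∈ range N, a n ≤ ∑ n ∈ range N, C * (S (n + 1) - S n) := sum_le_sum fun n _ => h n
      _ = C * (S N - S 0) := by rw [← mul_sum, sum_range_sub]
      _ ≤ C * B := by gcongr; exact hS N

section

variable {Ω : Type*} {m0 : MeasurableSpace Ω} {μ : Measure Ω}

section Simplex

variable {K : Type*} [Fintype K] {x y : K → ℝ}

lemma sum_abs_sub_le_two_of_mem_stdSimplex (hx : x ∈ stdSimplex ℝ K) (hy : y ∈ stdSimplex ℝ K) :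
    ∑ k, |x k - y k| ≤ 2 :=
  calc ∑ k, |x k - y k| ≤ ∑ k, (x k + y k) :=
        sum_le_sum fun k _ => abs_sub_le_iff.2 ⟨by linarith [hy.1 k], by linarith [hx.1 k]⟩
    _ = 2 := by rw [sum_add_distrib, hx.2, hy.2]; norm_num

lemma sum_sq_le_one_of_mem_stdSimplex (hx : x ∈ stdSimplex ℝ K) : ∑ k, x k ^ 2 ≤ 1 :=
  calc ∑ k, x k ^ 2 ≤ ∑ k, x k := sum_le_sum fun k _ => by
        obtain ⟨h0, h1⟩ := mem_Icc_of_mem_stdSimplex hx k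
        nlinarith
    _ = 1 := hx.2

variable [IsFiniteMeasure μ] {X Y : Ω → K → ℝ}

lemma memLp_apply_of_mem_stdSimplex (hX : AEStronglyMeasurable X μ)
    (hXs : ∀ ω, X ω ∈ stdSimplex ℝ K) (k : K) (q : ℝ≥0∞) : MemLp (fun ω => X ω k) q μ :=
  MemLp.of_bound ((continuous_apply k).comp_aestronglyMeasurable hX) 1 <| ae_of_all _ fun ω => by
    obtain ⟨h0, h1⟩ := mem_Icc_of_mem_stdSimplex (hXs ω) k
    rwa [Real.norm_of_nonneg h0]

lemma memLp_sum_abs_sub_of_mem_stdSimplex (hX : AEStronglyMeasurable X μ)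
    (hY : AEStronglyMeasurable Y μ) (hXs : ∀ ω, X ω ∈ stdSimplex ℝ K)
    (hYs : ∀ ω, Y ω ∈ stdSimplex ℝ K) (q : ℝ≥0∞) :
    MemLp (fun ω => ∑ k, |Y ω k - X ω k|) q μ :=
  MemLp.of_bound (by fun_prop) 2 <| ae_of_all _ fun ω => by
    rw [Real.norm_of_nonneg (sum_nonneg fun k _ => abs_nonneg _)]
    exact sum_abs_sub_le_two_of_mem_stdSimplex (hYs ω) (hXs ω)

end Simplex

lemma sum_integral_sq_apply_le_one_of_mem_stdSimplex {K : Type*} [Fintype K]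
    [IsProbabilityMeasure μ] {X : Ω → K → ℝ} (hX : AEStronglyMeasurable X μ)
    (hXs : ∀ ω, X ω ∈ stdSimplex ℝ K) : ∑ k, ∫ ω, X ω k ^ 2 ∂μ ≤ 1 := by
  rw [← integral_finsetSum _ fun k _ => (memLp_apply_of_mem_stdSimplex hX hXs k 2).integrable_sq]
  calc ∫ ω, ∑ k, X ω k ^ 2 ∂μ ≤ ∫ _, (1 : ℝ) ∂μ :=
        integral_mono_of_nonneg (ae_of_all _ fun ω => sum_nonneg fun k _ => sq_nonneg _)
          (integrable_const 1) (ae_of_all _ fun ω => sum_sq_le_one_of_mem_stdSimplex (hXs ω))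
    _ = 1 := by simp

section Martingale

variable {ι : Type*} [Preorder ι] {ℱ : Filtration ι m0}

theorem MeasureTheory.Martingale.comp_continuousLinearMap {E F : Type*} [NormedAddCommGroup E]
    [NormedSpace ℝ E] [CompleteSpace E] [NormedAddCommGroup F] [NormedSpace ℝ F] [CompleteSpace F]
    {f : ι → Ω → E} (hf : Martingale f ℱ μ) (L : E →L[ℝ] F) :
    Martingale (fun i => L ∘ f i) ℱ μ :=
  ⟨fun i => L.continuous.comp_stronglyMeasurable (hf.stronglyAdapted i), fun _ j hij =>
    (L.comp_condExp_comm (hf.integrable j)).symm.trans ((hf.condExp_ae_eq hij).fun_comp L)⟩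

theorem MeasureTheory.Martingale.integral_sub_sq [IsFiniteMeasure μ] {f : ι → Ω → ℝ}
    (hf : Martingale f ℱ μ) (hL2 : ∀ i, MemLp (f i) 2 μ) {i j : ι} (hij : i ≤ j) :
    ∫ ω, (f j ω - f i ω) ^ 2 ∂μ = ∫ ω, f j ω ^ 2 ∂μ - ∫ ω, f i ω ^ 2 ∂μ := by
  have hcross : ∫ ω, f i ω * f j ω ∂μ = ∫ ω, f i ω ^ 2 ∂μ :=
    calc ∫ ω, f i ω * f j ω ∂μ = ∫ ω, μ[f i * f j | ℱ i] ω ∂μ := (integral_condExp (ℱ.le i)).symm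
      _ = ∫ ω, f i ω ^ 2 ∂μ := integral_congr_ae <| by
        filter_upwards [condExp_mul_of_stronglyMeasurable_left (hf.stronglyMeasurable i)
          ((hL2 i).integrable_mul (hL2 j)) (hf.integrable j), hf.condExp_ae_eq hij] with ω h h'
        rw [h, Pi.mul_apply, h', sq]
  have hexpand : (fun ω => (f j ω - f i ω) ^ 2) =
      fun ω => f j ω ^ 2 - 2 * (f i ω * f j ω) + f i ω ^ 2 := by
    ext ω; ring
  have hmul : Integrable (fun ω => 2 * (f i ω * f j ω)) μ :=
    ((hL2 i).integrable_mul (hL2 j)).const_mul 2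
  have hdiff : Integrable (fun ω => f j ω ^ 2 - 2 * (f i ω * f j ω)) μ :=
    (hL2 j).integrable_sq.sub hmul
  rw [hexpand, integral_add hdiff (hL2 i).integrable_sq, integral_sub (hL2 j).integrable_sq hmul,
    integral_const_mul, hcross]
  ring

theorem integral_indicator_le_of_indicator_condExp_le [IsFiniteMeasure μ]
    {m : MeasurableSpace Ω} (hm : m ≤ m0) {s : Set Ω} (hs : MeasurableSet[m] s) {X Y : Ω → ℝ}
    {c : ℝ} (hX : Integrable X μ) (hY : Integrable Y μ) (hY0 : 0 ≤ᵐ[μ] Y) (hc : 0 ≤ c)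
    (h : ∀ᵐ ω ∂μ, s.indicator (μ[X | m]) ω ≤ c * s.indicator (μ[Y | m]) ω) :
    ∫ ω, s.indicator X ω ∂μ ≤ c * ∫ ω, Y ω ∂μ := by
  have hs₀ : MeasurableSet[m0] s := hm s hs
  calc ∫ ω, s.indicator X ω ∂μ = ∫ ω, s.indicator (μ[X | m]) ω ∂μ := by
        rw [integral_indicator hs₀, integral_indicator hs₀, setIntegral_condExp hm hX hs]
    _ ≤ ∫ ω, c * s.indicator (μ[Y | m]) ω ∂μ :=
        integral_mono_ae (integrable_condExp.indicator hs₀)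
          ((integrable_condExp.indicator hs₀).const_mul c) h
    _ = c * ∫ ω in s, Y ω ∂μ := by
        rw [integral_const_mul, integral_indicator hs₀, setIntegral_condExp hm hY hs]
    _ ≤ c * ∫ ω, Y ω ∂μ := mul_le_mul_of_nonneg_left (setIntegral_le_integral hY hY0) hc

end Martingale

theorem MeasureTheory.Martingale.integral_sq_sum_abs_sub_le {K : Type*} [Fintype K]
    [IsFiniteMeasure μ] {ℱ : Filtration ℕ m0} {p : ℕ → Ω → K → ℝ} (hp : Martingale p ℱ μ)
    (hsimplex : ∀ n ω, p n ω ∈ stdSimplex ℝ K) (n : ℕ) :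
    ∫ ω, (∑ k, |p (n + 1) ω k - p n ω k|) ^ 2 ∂μ ≤
      Fintype.card K * (∑ k, ∫ ω, p (n + 1) ω k ^ 2 ∂μ - ∑ k, ∫ ω, p n ω k ^ 2 ∂μ) := by
  have hmeas : ∀ n, AEStronglyMeasurable (p n) μ := fun n =>
    (hp.integrable n).aestronglyMeasurable
  have hL2 : ∀ n k, MemLp (fun ω => p n ω k) 2 μ := fun n k =>
    memLp_apply_of_mem_stdSimplex (hmeas n) (hsimplex n) k 2
  have hcoord : ∀ k, Martingale (fun n ω => p n ω k) ℱ μ := fun k =>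
    hp.comp_continuousLinearMap (ContinuousLinearMap.proj k)
  have hΔ : ∀ k, Integrable (fun ω => (p (n + 1) ω k - p n ω k) ^ 2) μ := fun k =>
    ((hL2 (n + 1) k).sub (hL2 n k)).integrable_sq
  calc ∫ ω, (∑ k, |p (n + 1) ω k - p n ω k|) ^ 2 ∂μ
      ≤ ∫ ω, Fintype.card K * ∑ k, (p (n + 1) ω k - p n ω k) ^ 2 ∂μ := by
        refine integral_mono (memLp_sum_abs_sub_of_mem_stdSimplex (hmeas n) (hmeas (n + 1))
          (hsimplex n) (hsimplex (n + 1)) 2).integrable_sq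
          ((integrable_finsetSum _ fun k _ => hΔ k).const_mul _) fun ω => ?_
        simpa only [sq_abs, card_univ] using sq_sum_le_card_mul_sum_sq (s := univ)
          (f := fun k => |p (n + 1) ω k - p n ω k|)
    _ = Fintype.card K * ∑ k, ∫ ω, (p (n + 1) ω k - p n ω k) ^ 2 ∂μ := by
        rw [integral_const_mul, integral_finsetSum _ fun k _ => hΔ k]
    _ = _ := by
        rw [← sum_sub_distrib]
        exact congrArg _ <| sum_congr rfl fun k _ =>
          (hcoord k).integral_sub_sq (fun n => hL2 n k) n.le_succ

end

theorem martingale_l1_variation_bound_general {K : Type*} [Fintype K]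
    {Ω : Type*} {m0 : MeasurableSpace Ω} {μ : Measure Ω} [IsProbabilityMeasure μ]
    (ℱ : Filtration ℕ m0)
    (p : ℕ → Ω → K → ℝ)
    (hmart : Martingale p ℱ μ)
    (hsimplex : ∀ (m : ℕ) (ω : Ω), (∀ k, 0 ≤ p m ω k) ∧ ∑ k, p m ω k = 1)
    (T : Ω → ℕ∞)
    (hT : ∀ m : ℕ, MeasurableSet[ℱ m] {ω | (m : ℕ∞) ≤ T ω})
    (c : ℝ) (hc : 0 < c)
    (hstep : ∀ m : ℕ, 1 ≤ m → ∀ᵐ ω ∂μ,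
      Set.indicator {ω' | (m : ℕ∞) ≤ T ω'}
          (μ[fun ω' => ∑ k, |p (m+1) ω' k - p m ω' k| | ℱ m]) ω ≤
        c * Set.indicator {ω' | (m : ℕ∞) ≤ T ω'}
          (μ[fun ω' => (∑ k, |p (m+1) ω' k - p m ω' k|) ^ 2 | ℱ m]) ω) :
    ∑' m : ℕ,
        ∫ ω, Set.indicator {ω' | ((m + 1 : ℕ) : ℕ∞) ≤ T ω'}
          (fun ω' => ∑ k, |p (m+2) ω' k - p (m+1) ω' k|) ω ∂μ ≤
      c * Fintype.card K := by
  have hmeas : ∀ n, AEStronglyMeasurable (p n) μ := fun n =>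
    (hmart.integrable n).aestronglyMeasurable
  have hF : ∀ n (q : ℝ≥0∞), MemLp (fun ω => ∑ k, |p (n + 1) ω k - p n ω k|) q μ := fun n =>
    memLp_sum_abs_sub_of_mem_stdSimplex (hmeas n) (hmeas (n + 1)) (hsimplex n) (hsimplex (n + 1))
  set S : ℕ → ℝ := fun n => ∑ k, ∫ ω, p (n + 1) ω k ^ 2 ∂μ
  have hS : ∀ n, S n - S 0 ≤ 1 := fun n => by
    have hS0 : 0 ≤ S 0 := sum_nonneg fun k _ => integral_nonneg fun ω => sq_nonneg _
    have hS1 : S n ≤ 1 :=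
      sum_integral_sq_apply_le_one_of_mem_stdSimplex (hmeas (n + 1)) (hsimplex (n + 1))
    linarith
  refine (tsum_le_of_le_mul_sub (fun m => integral_nonneg fun ω => Set.indicator_nonneg
    (fun ω _ => sum_nonneg fun k _ => abs_nonneg _) ω) (by positivity) hS fun m => ?_).trans_eq
    (mul_one _)
  calc _ ≤ c * ∫ ω, (∑ k, |p (m + 2) ω k - p (m + 1) ω k|) ^ 2 ∂μ :=
        integral_indicator_le_of_indicator_condExp_le (ℱ.le (m + 1)) (hT (m + 1))
          (memLp_one_iff_integrable.1 (hF (m + 1) 1)) (hF (m + 1) 2).integrable_sq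
          (ae_of_all _ fun ω => sq_nonneg _) hc.le (hstep (m + 1) (Nat.le_add_left 1 m))
    _ ≤ c * (Fintype.card K * (S (m + 1) - S m)) := by
        gcongr
        exact hmart.integral_sq_sum_abs_sub_le hsimplex (m + 1)
    _ = c * Fintype.card K * (S (m + 1) - S m) := by ring

/-- a Δ(K)-valued martingale whose conditional ℓ¹ increments are dominated
(before a stopping time T) by c times the conditional squared-ℓ¹ increments has expected
ℓ¹ variation up to T at most c·|K|. -/
theorem martingale_l1_variation_bound {K : Type*} [Fintype K] [Nonempty K]
    {Ω : Type*} {m0 : MeasurableSpace Ω} {μ : Measure Ω} [IsProbabilityMeasure μ]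
    (ℱ : Filtration ℕ m0)
    (p : ℕ → Ω → K → ℝ)
    (hmart : Martingale p ℱ μ)
    (hsimplex : ∀ (m : ℕ) (ω : Ω), (∀ k, 0 ≤ p m ω k) ∧ ∑ k, p m ω k = 1)
    (T : Ω → ℕ∞)
    (hT : ∀ m : ℕ, MeasurableSet[ℱ m] {ω | (m : ℕ∞) ≤ T ω})
    (c : ℝ) (hc : 0 < c)
    (hstep : ∀ m : ℕ, 1 ≤ m → ∀ᵐ ω ∂μ,
      Set.indicator {ω' | (m : ℕ∞) ≤ T ω'}
          (μ[fun ω' => ∑ k, |p (m+1) ω' k - p m ω' k| | ℱ m]) ω ≤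
        c * Set.indicator {ω' | (m : ℕ∞) ≤ T ω'}
          (μ[fun ω' => (∑ k, |p (m+1) ω' k - p m ω' k|) ^ 2 | ℱ m]) ω) :
    ∑' m : ℕ,
        ∫ ω, Set.indicator {ω' | ((m + 1 : ℕ) : ℕ∞) ≤ T ω'}
          (fun ω' => ∑ k, |p (m+2) ω' k - p (m+1) ω' k|) ω ∂μ ≤
      c * Fintype.card K :=
  martingale_l1_variation_bound_general ℱ p hmart hsimplex T hT c hc hstep
end

section
/- Let (x,p,p') ∈ X₀ and x' := T(x,p,p') be the translation of x relative to p and p'. Then for every i ∈ I, the marginal of x' under p' equals the marginal of x under p: x̄'^{p'}(i) = x̄^p(i), where x̄'^{p'}(i) := ∑_k p'(k)·x'(i|k). -/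
open Finset

noncomputable section
open Classical

/-- Membership in X₀. -/
def InX0 {K I : Type*} [Fintype K] (x : K → I → ℝ) (p p' : K → ℝ) : Prop :=
  (∀ (i : I) (k : K), 0 ≤ p' k + post p x i k - p k) ∧ ∀ k, 0 < p' k

/-- The translation mapping T(x,p,p'). -/
def translAction {K I : Type*} [Fintype K] (x : K → I → ℝ) (p p' : K → ℝ) : K → I → ℝ :=
  fun k i =>
    if InX0 x p p' then bar p x i / p' k * (p' k + post p x i k - p k) else x k i

/-! Writing `x' = T(x,p,p')`, the weight `p'(k)·x'(i|k)` is `x̄^p(i)·(p'(k) + p^x(k|i) − p(k))`,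
and the bracket sums to `1 + 1 − 1 = 1` over `k` because `p'`, the posterior `p^x(·|i)` and `p`
are all probability vectors. -/

theorem sum_post_eq_one {K I : Type*} [Fintype K] {p : K → ℝ} (hp : ∑ k, p k = 1)
    (x : K → I → ℝ) (i : I) : ∑ k, post p x i k = 1 := by
  by_cases h : bar p x i = 0
  · simpa [post, h] using hp
  · simp only [post, ne_eq, h, not_false_eq_true, if_true, ← Finset.sum_div]
    rw [← div_self h, bar]
    simp_rw [mul_comm]

theorem mul_translAction_of_inX0 {K I : Type*} [Fintype K] {x : K → I → ℝ} {p p' : K → ℝ}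
    (hX0 : InX0 x p p') (k : K) (i : I) :
    p' k * translAction x p p' k i = bar p x i * (p' k + post p x i k - p k) := by
  rw [translAction, if_pos hX0]
  field_simp [(hX0.2 k).ne']

theorem translAction_marginal_general {K I : Type*} [Fintype K]
    (x : K → I → ℝ)
    (p p' : K → ℝ) (hp : pSimplex p) (hp' : pSimplex p')
    (hX0 : InX0 x p p') :
    ∀ i : I, (∑ k, p' k * translAction x p p' k i) = bar p x i := by
  intro i
  calc ∑ k, p' k * translAction x p p' k i
      = bar p x i * ∑ k, (p' k + post p x i k - p k) := by
        simp only [mul_translAction_of_inX0 hX0, Finset.mul_sum]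
    _ = bar p x i := by
        rw [Finset.sum_sub_distrib, Finset.sum_add_distrib, hp'.2, sum_post_eq_one hp.2, hp.2]
        ring

/-- the translation preserves the marginal: x̄'^{p'}(i) = x̄^p(i). -/
theorem translAction_marginal {K I : Type*} [Fintype K] [Fintype I] [Nonempty K] [Nonempty I]
    (x : K → I → ℝ) (hx : MixedAction x)
    (p p' : K → ℝ) (hp : pSimplex p) (hp' : pSimplex p')
    (hX0 : InX0 x p p') :
    ∀ i : I, (∑ k, p' k * translAction x p p' k i) = bar p x i :=
  translAction_marginal_general x p p' hp hp' hX0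
end
end
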